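/- arXiv:2202.06083 — 8 statements merged into one kernel-verified Lean document; each statement's English description precedes it below -/
import Mathlib

section
/- Let d ≥ 1 and let A be a real symmetric d×d matrix whose smallest eigenvalue λ_min satisfies λ_min < 0 and whose largest eigenvalue λ_max satisfies 0 ≤ λ_max < 1. Then for every natural number J, ‖A(I − A)^J‖ ≤ (−λ_min)(1 − λ_min)^J + e/(J + 1), where I denotes the d×d identity matrix. -/
/-!
Since `A` is Hermitian, `A (I - A)^J = f(A)` for `f x = x (1 - x)^J`, and by the spectral theorem
its norm is at most `max_i |f(λ_i)|`. On `[λmin, 0]` the function `|f|` is largest at `λmin`; on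
`[0, 1]` one has `(J + 1) x (1 - x)^J ≤ x ∑_{k ≤ J} (1 - x)^k = 1 - (1 - x)^(J + 1) ≤ 1`.
-/

open scoped Matrix.Norms.L2Operator

lemma mul_one_sub_pow_le_one_div {x : ℝ} (hx0 : 0 ≤ x) (hx1 : x ≤ 1) (J : ℕ) :
    x * (1 - x) ^ J ≤ 1 / (J + 1) := by
  have hy0 : 0 ≤ 1 - x := by linarith
  have hgeom : (J + 1) * (1 - x) ^ J ≤ ∑ k ∈ Finset.range (J + 1), (1 - x) ^ k := by
    simpa [mul_comm] using Finset.sum_le_sum fun k hk =>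
      pow_le_pow_of_le_one hy0 (by linarith) (Nat.le_of_lt_succ (Finset.mem_range.mp hk))
  have htel : x * ∑ k ∈ Finset.range (J + 1), (1 - x) ^ k = 1 - (1 - x) ^ (J + 1) := by
    have := geom_sum_mul (1 - x) (J + 1)
    linear_combination -this
  rw [le_div_iff₀ (by positivity)]
  nlinarith [mul_le_mul_of_nonneg_left hgeom hx0, pow_nonneg hy0 (J + 1)]

lemma neg_mul_one_sub_pow_le {m x : ℝ} (hmx : m ≤ x) (hx : x ≤ 0) (J : ℕ) :
    -x * (1 - x) ^ J ≤ -m * (1 - m) ^ J :=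
  mul_le_mul (by linarith) (pow_le_pow_left₀ (by linarith) (by linarith) J)
    (pow_nonneg (by linarith) J) (by linarith)

lemma abs_mul_one_sub_pow_le {m x : ℝ} (hm : m ≤ 0) (hmx : m ≤ x) (hx : x ≤ 1) (J : ℕ) :
    |x * (1 - x) ^ J| ≤ -m * (1 - m) ^ J + 1 / (J + 1) := by
  have hpow : 0 ≤ (1 - x) ^ J := pow_nonneg (by linarith) J
  have hm' : 0 ≤ -m * (1 - m) ^ J := mul_nonneg (by linarith) (pow_nonneg (by linarith) J)
  have hJ : (0 : ℝ) ≤ 1 / (J + 1) := by positivity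
  rcases le_total x 0 with hx0 | hx0
  · rw [abs_of_nonpos (mul_nonpos_of_nonpos_of_nonneg hx0 hpow), ← neg_mul]
    linarith [neg_mul_one_sub_pow_le hmx hx0 J]
  · rw [abs_of_nonneg (mul_nonneg hx0 hpow)]
    linarith [mul_one_sub_pow_le_one_div hx0 hx J]

namespace Matrix.IsHermitian

variable {n 𝕜 : Type*} [Fintype n] [DecidableEq n] [RCLike 𝕜] {A : Matrix n n 𝕜}

lemma norm_cfc_le (hA : A.IsHermitian) (f : ℝ → ℝ) {c : ℝ} (hc : 0 ≤ c)
    (h : ∀ i, |f (hA.eigenvalues i)| ≤ c) : ‖cfc f A‖ ≤ c := by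
  rw [hA.cfc_eq, IsHermitian.cfc, Unitary.conjStarAlgAut_apply, ← Unitary.coe_star,
    CStarRing.norm_mul_coe_unitary, CStarRing.norm_coe_unitary_mul, l2_opNorm_diagonal]
  exact (pi_norm_le_iff_of_nonneg hc).mpr fun i => by simpa using h i

end Matrix.IsHermitian

lemma cfc_mul_one_sub_pow {R : Type*} [Ring R] [StarRing R] [Algebra ℝ R] [TopologicalSpace R]
    {p : R → Prop} [ContinuousFunctionalCalculus ℝ R p] (a : R) (J : ℕ) (ha : p a := by cfc_tac) :
    cfc (fun x : ℝ => x * (1 - x) ^ J) a = a * (1 - a) ^ J := by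
  rw [cfc_mul (fun x => x) (fun x => (1 - x) ^ J) a, cfc_pow (fun x => 1 - x) J a,
    cfc_sub (fun _ => 1) (fun x => x) a, cfc_const_one ℝ a, cfc_id' ℝ a]

theorem stmt_0_general {d : ℕ} (A : Matrix (Fin d) (Fin d) ℝ)
    (hA : A.IsHermitian) (lammin lammax : ℝ)
    (hmin : IsLeast (Set.range hA.eigenvalues) lammin)
    (hmax : IsGreatest (Set.range hA.eigenvalues) lammax)
    (hminneg : lammin < 0) (hmaxlt : lammax < 1)
    (J : ℕ) :
    ‖(Matrix.toEuclideanCLM (𝕜 := ℝ) (n := Fin d) (A * (1 - A) ^ J) : EuclideanSpace ℝ (Fin d) →L[ℝ] EuclideanSpace ℝ (Fin d))‖ ≤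
      (-lammin) * (1 - lammin) ^ J + Real.exp 1 / (J + 1) := by
  rw [← Matrix.cstar_norm_def, ← cfc_mul_one_sub_pow A J hA.isSelfAdjoint]
  have hc : 0 ≤ -lammin * (1 - lammin) ^ J + Real.exp 1 / (J + 1) :=
    add_nonneg (mul_nonneg (by linarith) (pow_nonneg (by linarith) J)) (by positivity)
  refine hA.norm_cfc_le _ hc fun i => ?_
  have hlow : lammin ≤ hA.eigenvalues i := hmin.2 ⟨i, rfl⟩
  have hup : hA.eigenvalues i ≤ lammax := hmax.2 ⟨i, rfl⟩
  calc _ ≤ -lammin * (1 - lammin) ^ J + 1 / (J + 1) :=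
        abs_mul_one_sub_pow_le hminneg.le hlow (hup.trans hmaxlt.le) J
    _ ≤ -lammin * (1 - lammin) ^ J + Real.exp 1 / (J + 1) := by
        gcongr
        exact Real.one_le_exp zero_le_one

/-- Let `A` be a real symmetric `d × d` matrix (`d ≥ 1`) whose smallest eigenvalue
`λmin` satisfies `λmin < 0` and whose largest eigenvalue `λmax` satisfies
`0 ≤ λmax < 1`. Then for every `J : ℕ`,
`‖A (I - A)^J‖ ≤ (-λmin)(1 - λmin)^J + e / (J + 1)`,
where `‖·‖` is the operator norm induced by the Euclidean norm. -/
theorem stmt_0 {d : ℕ} (hd : 1 ≤ d) (A : Matrix (Fin d) (Fin d) ℝ)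
    (hA : A.IsHermitian) (lammin lammax : ℝ)
    (hmin : IsLeast (Set.range hA.eigenvalues) lammin)
    (hmax : IsGreatest (Set.range hA.eigenvalues) lammax)
    (hminneg : lammin < 0) (hmaxnonneg : 0 ≤ lammax) (hmaxlt : lammax < 1)
    (J : ℕ) :
    ‖(Matrix.toEuclideanCLM (𝕜 := ℝ) (n := Fin d) (A * (1 - A) ^ J) : EuclideanSpace ℝ (Fin d) →L[ℝ] EuclideanSpace ℝ (Fin d))‖ ≤
      (-lammin) * (1 - lammin) ^ J + Real.exp 1 / (J + 1) :=
  stmt_0_general A hA lammin lammax hmin hmax hminneg hmaxlt J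
end

section
/- Let f : ℝ^d → ℝ be differentiable and L-gradient Lipschitz with L ≥ 0. Let η > 0, r ≥ 0, and let x, v, ξ ∈ ℝ^d with ‖ξ‖ ≤ r, and set x₊ = x − η(v − ξ). Then f(x₊) ≤ f(x) + η‖v − ∇f(x)‖² − (η/2)‖∇f(x)‖² − (1/(2η) − L/2)‖x₊ − x‖² + η r². -/
/-!
By the descent lemma, `f x₊ ≤ f x + ⟪∇f x, x₊ - x⟫ + (L/2) ‖x₊ - x‖²`. With `u = v - ξ` the step is
`x₊ - x = -η u`, and polarization gives
`-η ⟪∇f x, u⟫ = (η/2) ‖∇f x - u‖² - (η/2) ‖∇f x‖² - (1/(2η)) ‖x₊ - x‖²`.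
Finally `∇f x - u = ξ - (v - ∇f x)`, so `‖∇f x - u‖² ≤ 2 ‖v - ∇f x‖² + 2 r²`.
-/

open scoped RealInnerProductSpace Gradient

theorem norm_sub_sub_sq_le {G : Type*} [SeminormedAddCommGroup G] {g v ξ : G} {r : ℝ}
    (hξ : ‖ξ‖ ≤ r) : ‖g - (v - ξ)‖ ^ 2 ≤ 2 * ‖v - g‖ ^ 2 + 2 * r ^ 2 := by
  have hle : ‖g - (v - ξ)‖ ≤ ‖v - g‖ + r :=
    calc ‖g - (v - ξ)‖ = ‖ξ - (v - g)‖ := by congr 1; abel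
      _ ≤ ‖ξ‖ + ‖v - g‖ := norm_sub_le _ _
      _ ≤ ‖v - g‖ + r := by linarith
  nlinarith [norm_nonneg (g - (v - ξ)), sq_nonneg (‖v - g‖ - r)]

section Descent

variable {E : Type*} [NormedAddCommGroup E] [InnerProductSpace ℝ E] [CompleteSpace E]

theorem hasDerivAt_comp_add_smul_of_differentiableAt {f : E → ℝ} {x w : E} {t : ℝ}
    (hf : DifferentiableAt ℝ f (x + t • w)) :
    HasDerivAt (fun s : ℝ => f (x + s • w)) ⟪∇ f (x + t • w), w⟫ t := by
  have hline : HasDerivAt (fun s : ℝ => x + s • w) w t := by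
    simpa using ((hasDerivAt_id t).smul_const w).const_add x
  exact hf.hasGradientAt.hasFDerivAt.comp_hasDerivAt t hline

theorem apply_le_add_inner_gradient_add_sq_norm {f : E → ℝ} {L : ℝ} (hf : Differentiable ℝ f)
    (hlip : ∀ x y, ‖∇ f x - ∇ f y‖ ≤ L * ‖x - y‖) (x y : E) :
    f y ≤ f x + ⟪∇ f x, y - x⟫ + L / 2 * ‖y - x‖ ^ 2 := by
  set w := y - x
  -- `φ' t = ⟪∇f (x + t • w) - ∇f x, w⟫ - L t ‖w‖² ≤ 0` for `t ≥ 0`, so `φ 1 ≤ φ 0`.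
  let φ : ℝ → ℝ := fun t => f (x + t • w) - t * ⟪∇ f x, w⟫ - L / 2 * t ^ 2 * ‖w‖ ^ 2
  have hφ : ∀ t, HasDerivAt φ (⟪∇ f (x + t • w), w⟫ - ⟪∇ f x, w⟫ - L * t * ‖w‖ ^ 2) t :=
    fun t => (((hasDerivAt_comp_add_smul_of_differentiableAt (hf (x + t • w))).sub
      ((hasDerivAt_id t).mul_const ⟪∇ f x, w⟫)).sub
      (((hasDerivAt_pow 2 t).const_mul (L / 2)).mul_const (‖w‖ ^ 2))).congr_deriv
      (by push_cast; ring)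
  have hφ_nonpos : ∀ t ∈ interior (Set.Ici (0 : ℝ)),
      ⟪∇ f (x + t • w), w⟫ - ⟪∇ f x, w⟫ - L * t * ‖w‖ ^ 2 ≤ 0 := by
    intro t ht
    rw [interior_Ici] at ht
    calc ⟪∇ f (x + t • w), w⟫ - ⟪∇ f x, w⟫ - L * t * ‖w‖ ^ 2
        = ⟪∇ f (x + t • w) - ∇ f x, w⟫ - L * t * ‖w‖ ^ 2 := by rw [inner_sub_left]
      _ ≤ ‖∇ f (x + t • w) - ∇ f x‖ * ‖w‖ - L * t * ‖w‖ ^ 2 := by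
        gcongr; exact real_inner_le_norm _ _
      _ ≤ L * ‖(x + t • w) - x‖ * ‖w‖ - L * t * ‖w‖ ^ 2 := by
        gcongr; exact hlip _ _
      _ = 0 := by
        rw [add_sub_cancel_left, norm_smul, Real.norm_of_nonneg ht.le]; ring
  have hanti : AntitoneOn φ (Set.Ici 0) :=
    antitoneOn_of_hasDerivWithinAt_nonpos (convex_Ici 0)
      (fun t _ => (hφ t).continuousAt.continuousWithinAt)
      (fun t _ => (hφ t).hasDerivWithinAt) hφ_nonpos
  have h10 : φ 1 ≤ φ 0 := hanti Set.self_mem_Ici (Set.mem_Ici.2 zero_le_one) zero_le_one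
  simp only [φ, w, one_smul, zero_smul, add_zero, add_sub_cancel, one_pow, one_mul, zero_mul,
    zero_pow two_ne_zero, mul_zero, sub_zero] at h10
  linarith

end Descent

theorem stmt_1_general {d : ℕ} (f : EuclideanSpace ℝ (Fin d) → ℝ) (L : ℝ)
    (hf : Differentiable ℝ f)
    (hlip : ∀ x y : EuclideanSpace ℝ (Fin d),
      ‖gradient f x - gradient f y‖ ≤ L * ‖x - y‖)
    (η r : ℝ) (hη : 0 < η)
    (x v ξ xp : EuclideanSpace ℝ (Fin d)) (hξ : ‖ξ‖ ≤ r)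
    (hxp : xp = x - η • (v - ξ)) :
    f xp ≤ f x + η * ‖v - gradient f x‖ ^ 2 - (η / 2) * ‖gradient f x‖ ^ 2
      - (1 / (2 * η) - L / 2) * ‖xp - x‖ ^ 2 + η * r ^ 2 := by
  have hdescent := apply_le_add_inner_gradient_add_sq_norm hf hlip x xp
  set g := ∇ f x
  set u := v - ξ
  have hstep : xp - x = -(η • u) := by rw [hxp]; abel
  have hinner : ⟪g, -(η • u)⟫ = η / 2 * ‖g - u‖ ^ 2 - η / 2 * ‖g‖ ^ 2 - η / 2 * ‖u‖ ^ 2 := by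
    rw [inner_neg_right, real_inner_smul_right, norm_sub_sq_real]; ring
  have hnorm : ‖-(η • u)‖ ^ 2 = η ^ 2 * ‖u‖ ^ 2 := by
    rw [norm_neg, norm_smul, Real.norm_of_nonneg hη.le, mul_pow]
  have hquad : (1 / (2 * η) - L / 2) * (η ^ 2 * ‖u‖ ^ 2)
      = η / 2 * ‖u‖ ^ 2 - L / 2 * (η ^ 2 * ‖u‖ ^ 2) := by
    field_simp
  have hgu := mul_le_mul_of_nonneg_left (norm_sub_sub_sq_le (g := g) (v := v) hξ) hη.le
  rw [hstep, hinner, hnorm] at hdescent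
  rw [hstep, hnorm]
  linarith

/-- One-step descent inequality: if `f` is differentiable with `L`-Lipschitz
gradient, `η > 0`, `r ≥ 0`, `‖ξ‖ ≤ r`, and `x₊ = x - η (v - ξ)`, then
`f x₊ ≤ f x + η ‖v - ∇f x‖² - (η/2) ‖∇f x‖² - (1/(2η) - L/2) ‖x₊ - x‖² + η r²`. -/
theorem stmt_1 {d : ℕ} (f : EuclideanSpace ℝ (Fin d) → ℝ) (L : ℝ) (hL : 0 ≤ L)
    (hf : Differentiable ℝ f)
    (hlip : ∀ x y : EuclideanSpace ℝ (Fin d),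
      ‖gradient f x - gradient f y‖ ≤ L * ‖x - y‖)
    (η r : ℝ) (hη : 0 < η) (hr : 0 ≤ r)
    (x v ξ xp : EuclideanSpace ℝ (Fin d)) (hξ : ‖ξ‖ ≤ r)
    (hxp : xp = x - η • (v - ξ)) :
    f xp ≤ f x + η * ‖v - gradient f x‖ ^ 2 - (η / 2) * ‖gradient f x‖ ^ 2
      - (1 / (2 * η) - L / 2) * ‖xp - x‖ ^ 2 + η * r ^ 2 :=
  stmt_1_general f L hf hlip η r hη x v ξ xp hξ hxp
end

section
/- Let f : ℝ^d → ℝ be differentiable and L-gradient Lipschitz with L ≥ 0, let η > 0, r ≥ 0, and N ∈ ℕ. Let x_0, …, x_N ∈ ℝ^d and v_0, …, v_{N−1}, ξ_0, …, ξ_{N−1} ∈ ℝ^d satisfy x_{i+1} = x_i − η(v_i − ξ_i) and ‖ξ_i‖ ≤ r for every 0 ≤ i < N. Then f(x_N) ≤ f(x_0) + η ∑_{i=0}^{N−1} ‖v_i − ∇f(x_i)‖² − (η/2) ∑_{i=0}^{N−1} ‖∇f(x_i)‖² − (1/(2η) − L/2) ∑_{i=0}^{N−1} ‖x_{i+1}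 − x_i‖² + η N r². -/
/-!
By the descent lemma for an `L`-smooth function, one step `x' = x - η w` with `w = v - ξ` gives
`f x' ≤ f x - η ⟪∇f x, w⟫ + (L/2) ‖x' - x‖²`. Writing
`-2 ⟪∇f x, w⟫ = ‖∇f x - w‖² - ‖∇f x‖² - ‖w‖²` and bounding
`‖∇f x - w‖² ≤ 2 ‖v - ∇f x‖² + 2 r²` yields the one-step inequality, since `η ‖w‖² = ‖x' - x‖² / η`.
Summing it over the `N` steps telescopes.
-/

open scoped RealInnerProductSpace

variable {E : Type*} [NormedAddCommGroup E] [InnerProductSpace ℝ E] [CompleteSpace E]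

theorem hasDerivAt_comp_add_smul {f : E → ℝ} (hf : Differentiable ℝ f) (x u : E) (t : ℝ) :
    HasDerivAt (fun s : ℝ => f (x + s • u)) ⟪gradient f (x + t • u), u⟫ t := by
  have hline : HasDerivAt (fun s : ℝ => x + s • u) u t := by
    simpa using ((hasDerivAt_id t).smul_const u).const_add x
  rw [inner_gradient_left]
  exact (hf _).hasFDerivAt.comp_hasDerivAt t hline

theorem le_add_inner_gradient_add_sq_of_lipschitz {f : E → ℝ} {L : ℝ} (hf : Differentiable ℝ f)
    (hlip : ∀ x y, ‖gradient f x - gradient f y‖ ≤ L * ‖x - y‖) (x y : E) :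
    f y ≤ f x + ⟪gradient f x, y - x⟫ + L / 2 * ‖y - x‖ ^ 2 := by
  set u := y - x
  -- The Lipschitz bound makes the gap to the quadratic model antitone in `t ≥ 0`; compare `t = 0, 1`.
  set g : ℝ → ℝ := fun t => f (x + t • u) - t * ⟪gradient f x, u⟫ - L / 2 * ‖u‖ ^ 2 * t ^ 2
  have hg : ∀ t, HasDerivAt g
      (⟪gradient f (x + t • u), u⟫ - ⟪gradient f x, u⟫ - L * ‖u‖ ^ 2 * t) t := fun t => by
    refine (((hasDerivAt_comp_add_smul hf x u t).sub ((hasDerivAt_id t).mul_const _)).sub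
      ((hasDerivAt_pow 2 t).const_mul (L / 2 * ‖u‖ ^ 2))).congr_deriv ?_
    push_cast; ring
  have hg' : ∀ t ∈ interior (Set.Ici (0 : ℝ)),
      ⟪gradient f (x + t • u), u⟫ - ⟪gradient f x, u⟫ - L * ‖u‖ ^ 2 * t ≤ 0 := by
    intro t ht
    rw [interior_Ici, Set.mem_Ioi] at ht
    calc ⟪gradient f (x + t • u), u⟫ - ⟪gradient f x, u⟫ - L * ‖u‖ ^ 2 * t
        = ⟪gradient f (x + t • u) - gradient f x, u⟫ - L * ‖u‖ ^ 2 * t := by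
          rw [inner_sub_left]
      _ ≤ ‖gradient f (x + t • u) - gradient f x‖ * ‖u‖ - L * ‖u‖ ^ 2 * t := by
          gcongr; exact real_inner_le_norm _ _
      _ ≤ L * ‖(x + t • u) - x‖ * ‖u‖ - L * ‖u‖ ^ 2 * t := by
          gcongr; exact hlip _ _
      _ = 0 := by
          rw [add_sub_cancel_left, norm_smul, Real.norm_of_nonneg ht.le]; ring
  have hanti : AntitoneOn g (Set.Ici 0) :=
    antitoneOn_of_hasDerivWithinAt_nonpos (convex_Ici 0)
      (fun t _ => (hg t).continuousAt.continuousWithinAt)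
      (fun t _ => (hg t).hasDerivWithinAt) hg'
  have h01 := hanti Set.self_mem_Ici (Set.mem_Ici.2 zero_le_one) zero_le_one
  simp only [g, zero_smul, one_smul, add_zero, zero_mul, sub_zero, one_mul, one_pow, mul_one,
    ne_eq, OfNat.ofNat_ne_zero, not_false_eq_true, zero_pow, mul_zero, u, add_sub_cancel] at h01
  linarith

theorem apply_perturbed_gradient_step_le {f : E → ℝ} {L η r : ℝ} (hf : Differentiable ℝ f)
    (hlip : ∀ x y, ‖gradient f x - gradient f y‖ ≤ L * ‖x - y‖) (hη : 0 < η) {x v ξ : E}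
    (hξ : ‖ξ‖ ≤ r) :
    f (x - η • (v - ξ)) ≤ f x + η * ‖v - gradient f x‖ ^ 2 - η / 2 * ‖gradient f x‖ ^ 2
      - (1 / (2 * η) - L / 2) * ‖x - η • (v - ξ) - x‖ ^ 2 + η * r ^ 2 := by
  set g := gradient f x
  set w := v - ξ
  have hdescent := le_add_inner_gradient_add_sq_of_lipschitz hf hlip x (x - η • w)
  have hnorm : ‖η • w‖ ^ 2 = η ^ 2 * ‖w‖ ^ 2 := by
    rw [norm_smul, Real.norm_of_nonneg hη.le, mul_pow]
  rw [sub_sub_cancel_left, inner_neg_right, real_inner_smul_right, norm_neg, hnorm] at hdescent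
  rw [sub_sub_cancel_left, norm_neg, hnorm]
  have hexpand : ‖g - w‖ ^ 2 = ‖g‖ ^ 2 - 2 * ⟪g, w⟫ + ‖w‖ ^ 2 := norm_sub_sq_real g w
  have hbound : ‖g - w‖ ^ 2 ≤ 2 * (‖v - g‖ ^ 2 + r ^ 2) := by
    have hgw : g - w = -((v - g) - ξ) := by simp only [w]; abel
    calc ‖g - w‖ ^ 2 ≤ (‖v - g‖ + ‖ξ‖) ^ 2 := by
          rw [hgw, norm_neg]; gcongr; exact norm_sub_le _ _
      _ ≤ 2 * (‖v - g‖ ^ 2 + ‖ξ‖ ^ 2) := add_sq_le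
      _ ≤ 2 * (‖v - g‖ ^ 2 + r ^ 2) := by gcongr
  have hcoef : 1 / (2 * η) * η ^ 2 = η / 2 := by field_simp
  nlinarith [mul_le_mul_of_nonneg_left hbound hη.le]

theorem stmt_2_general {d : ℕ} (f : EuclideanSpace ℝ (Fin d) → ℝ) (L : ℝ)
    (hf : Differentiable ℝ f)
    (hlip : ∀ x y : EuclideanSpace ℝ (Fin d),
      ‖gradient f x - gradient f y‖ ≤ L * ‖x - y‖)
    (η r : ℝ) (hη : 0 < η) (N : ℕ)
    (x v ξ : ℕ → EuclideanSpace ℝ (Fin d))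
    (hupd : ∀ i < N, x (i + 1) = x i - η • (v i - ξ i))
    (hξ : ∀ i < N, ‖ξ i‖ ≤ r) :
    f (x N) ≤ f (x 0)
      + η * ∑ i ∈ Finset.range N, ‖v i - gradient f (x i)‖ ^ 2
      - (η / 2) * ∑ i ∈ Finset.range N, ‖gradient f (x i)‖ ^ 2
      - (1 / (2 * η) - L / 2) * ∑ i ∈ Finset.range N, ‖x (i + 1) - x i‖ ^ 2
      + η * N * r ^ 2 := by
  have hstep : ∀ i ∈ Finset.range N, f (x (i + 1)) - f (x i) ≤
      η * ‖v i - gradient f (x i)‖ ^ 2 - η / 2 * ‖gradient f (x i)‖ ^ 2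
        - (1 / (2 * η) - L / 2) * ‖x (i + 1) - x i‖ ^ 2 + η * r ^ 2 := by
    intro i hi
    rw [hupd i (Finset.mem_range.1 hi)]
    linarith [apply_perturbed_gradient_step_le (x := x i) (v := v i) hf hlip hη
      (hξ i (Finset.mem_range.1 hi))]
  have hsum := Finset.sum_le_sum hstep
  simp only [Finset.sum_range_sub (fun i => f (x i)), Finset.sum_add_distrib,
    Finset.sum_sub_distrib, ← Finset.mul_sum, Finset.sum_const, Finset.card_range,
    nsmul_eq_mul] at hsum
  linarith

/-- Multi-step descent inequality along the perturbed update
`x_{i+1} = x_i - η (v_i - ξ_i)` with `‖ξ_i‖ ≤ r`. -/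
theorem stmt_2 {d : ℕ} (f : EuclideanSpace ℝ (Fin d) → ℝ) (L : ℝ) (hL : 0 ≤ L)
    (hf : Differentiable ℝ f)
    (hlip : ∀ x y : EuclideanSpace ℝ (Fin d),
      ‖gradient f x - gradient f y‖ ≤ L * ‖x - y‖)
    (η r : ℝ) (hη : 0 < η) (hr : 0 ≤ r) (N : ℕ)
    (x v ξ : ℕ → EuclideanSpace ℝ (Fin d))
    (hupd : ∀ i < N, x (i + 1) = x i - η • (v i - ξ i))
    (hξ : ∀ i < N, ‖ξ i‖ ≤ r) :
    f (x N) ≤ f (x 0)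
      + η * ∑ i ∈ Finset.range N, ‖v i - gradient f (x i)‖ ^ 2
      - (η / 2) * ∑ i ∈ Finset.range N, ‖gradient f (x i)‖ ^ 2
      - (1 / (2 * η) - L / 2) * ∑ i ∈ Finset.range N, ‖x (i + 1) - x i‖ ^ 2
      + η * N * r ^ 2 :=
  stmt_2_general f L hf hlip η r hη N x v ξ hupd hξ
end

section
/- (Improve or localize.) Let f : ℝ^d → ℝ be differentiable and L-gradient Lipschitz with L ≥ 0, let η > 0 with ηL ≤ 1/4, let r ≥ 0 and N ∈ ℕ. Let x_0, …, x_N ∈ ℝ^d and v_0, …, v_{N−1}, ξ_0, …, ξ_{N−1} ∈ ℝ^d satisfy x_{i+1} = x_i − η(v_i − ξ_i) and ‖ξ_i‖ ≤ r for every 0 ≤ i < N. Then for every 0 ≤ J ≤ N, ‖x_J − x_0‖² ≤ 8ηJ · ( f(x_0) − f(x_J) + η ∑_{i=0}^{J−1} ‖v_i − ∇f(x_i)‖² + η J r² ). -/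
/-!
Along the segment from `x` to `y` the derivative of `f` moves by at most `L‖y - x‖`, so the
mean value inequality gives the descent bound `f y ≤ f x + ⟪∇f x, y - x⟫ + L‖y - x‖²`.
Applied to one step `x' = x - η u` with `u = v - ξ`, and writing `⟪∇f x, u⟫ = ‖u‖² - ⟪u - ∇f x, u⟫`,
Young's inequality and `ηL ≤ 1/4` turn it into
`‖x' - x‖² ≤ 4η (f x - f x') + 2η² ‖v - ∇f x - ξ‖²`. Summing over the first `J` steps telescopes the
function values, and `‖x_J - x_0‖² ≤ J ∑ ‖x_{i+1} - x_i‖²` by the triangle and Cauchy–Schwarz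
inequalities.
-/

open InnerProductSpace Finset

section Descent

variable {E : Type*} [NormedAddCommGroup E] [InnerProductSpace ℝ E] [CompleteSpace E]
  {f : E → ℝ} {L : ℝ}

theorem image_sub_sub_inner_gradient_le (hf : Differentiable ℝ f)
    (hlip : ∀ x y, ‖gradient f x - gradient f y‖ ≤ L * ‖x - y‖) (x y : E) :
    f y - f x - ⟪gradient f x, y - x⟫_ℝ ≤ L * ‖y - x‖ ^ 2 := by
  rcases eq_or_ne y x with rfl | hne
  · simp
  have hL : 0 ≤ L := nonneg_of_mul_nonneg_left ((norm_nonneg _).trans (hlip y x))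
    (norm_pos_iff.mpr (sub_ne_zero.mpr hne))
  have hfderiv : ∀ w, fderiv ℝ f w = toDual ℝ E (gradient f w) := fun w =>
    (hasGradientAt_iff_hasFDerivAt.mp (hf w).hasGradientAt).fderiv
  have hsegment : ∀ z ∈ segment ℝ x y, ‖fderiv ℝ f z - fderiv ℝ f x‖ ≤ L * ‖y - x‖ := by
    rintro z ⟨a, b, ha, hb, hab, rfl⟩
    have hz : a • x + b • y - x = b • (y - x) := by
      rw [eq_sub_of_add_eq hab]; module
    calc ‖fderiv ℝ f (a • x + b • y) - fderiv ℝ f x‖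
        = ‖gradient f (a • x + b • y) - gradient f x‖ := by
          rw [hfderiv, hfderiv, ← map_sub, LinearIsometryEquiv.norm_map]
      _ ≤ L * (b * ‖y - x‖) := by
          simpa [hz, norm_smul, abs_of_nonneg hb] using hlip (a • x + b • y) x
      _ ≤ L * ‖y - x‖ := by
          gcongr; exact mul_le_of_le_one_left (norm_nonneg _) (by linarith)
  have hmvt := Convex.norm_image_sub_le_of_norm_fderiv_le' (fun z _ => hf z) hsegment
    (convex_segment x y) (left_mem_segment ℝ x y) (right_mem_segment ℝ x y)
  rw [hfderiv, toDual_apply_apply] at hmvt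
  calc f y - f x - ⟪gradient f x, y - x⟫_ℝ ≤ L * ‖y - x‖ * ‖y - x‖ := (le_abs_self _).trans hmvt
    _ = L * ‖y - x‖ ^ 2 := by ring

theorem sq_norm_perturbed_step_le (hf : Differentiable ℝ f)
    (hlip : ∀ x y, ‖gradient f x - gradient f y‖ ≤ L * ‖x - y‖)
    {η r : ℝ} (hη : 0 < η) (hηL : η * L ≤ 1 / 4) {x v ξ : E} (hξ : ‖ξ‖ ≤ r) :
    ‖η • (v - ξ)‖ ^ 2 ≤ 4 * η * (f x - f (x - η • (v - ξ)))
      + 4 * η ^ 2 * (‖v - gradient f x‖ ^ 2 + r ^ 2) := by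
  set u := v - ξ
  set e := v - gradient f x
  have hdescent := image_sub_sub_inner_gradient_le hf hlip x (x - η • u)
  rw [sub_sub_cancel_left, inner_neg_right, real_inner_smul_right, norm_neg, norm_smul,
    Real.norm_eq_abs, abs_of_pos hη] at hdescent
  have hinner : ⟪gradient f x, u⟫_ℝ = ‖u‖ ^ 2 - ⟪e - ξ, u⟫_ℝ := by
    rw [← real_inner_self_eq_norm_sq, ← inner_sub_left]; congr 1; simp only [u, e]; abel
  have hcs : ⟪e - ξ, u⟫_ℝ ≤ ‖e - ξ‖ * ‖u‖ := real_inner_le_norm _ _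
  have herr : ‖e - ξ‖ ^ 2 ≤ 2 * ‖e‖ ^ 2 + 2 * r ^ 2 := by
    have htri : ‖e - ξ‖ ≤ ‖e‖ + ‖ξ‖ := norm_sub_le _ _
    have hξsq : ‖ξ‖ ^ 2 ≤ r ^ 2 := pow_le_pow_left₀ (norm_nonneg _) hξ 2
    nlinarith [norm_nonneg (e - ξ), sq_nonneg (‖e‖ - ‖ξ‖)]
  have hcurv : L * (η * ‖u‖) ^ 2 ≤ η / 4 * ‖u‖ ^ 2 := by
    nlinarith [mul_nonneg hη.le (sq_nonneg ‖u‖)]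
  rw [norm_smul, Real.norm_eq_abs, abs_of_pos hη]
  nlinarith [mul_nonneg hη.le (sq_nonneg (‖e - ξ‖ - ‖u‖))]

end Descent

theorem sq_norm_sub_le_mul_sum_sq_norm_sub {E : Type*} [SeminormedAddCommGroup E]
    (x : ℕ → E) (J : ℕ) :
    ‖x J - x 0‖ ^ 2 ≤ J * ∑ i ∈ range J, ‖x (i + 1) - x i‖ ^ 2 := by
  have htri : ‖x J - x 0‖ ≤ ∑ i ∈ range J, ‖x (i + 1) - x i‖ := by
    simpa [dist_eq_norm, norm_sub_rev] using dist_le_range_sum_dist x J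
  calc ‖x J - x 0‖ ^ 2 ≤ (∑ i ∈ range J, ‖x (i + 1) - x i‖) ^ 2 :=
        pow_le_pow_left₀ (norm_nonneg _) htri 2
    _ ≤ J * ∑ i ∈ range J, ‖x (i + 1) - x i‖ ^ 2 := by
        simpa using sq_sum_le_card_mul_sum_sq (s := range J) (f := fun i => ‖x (i + 1) - x i‖)

theorem stmt_3_general {d : ℕ} (f : EuclideanSpace ℝ (Fin d) → ℝ) (L : ℝ)
    (hf : Differentiable ℝ f)
    (hlip : ∀ x y : EuclideanSpace ℝ (Fin d),
      ‖gradient f x - gradient f y‖ ≤ L * ‖x - y‖)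
    (η r : ℝ) (hη : 0 < η) (hηL : η * L ≤ 1 / 4) (N : ℕ)
    (x v ξ : ℕ → EuclideanSpace ℝ (Fin d))
    (hupd : ∀ i < N, x (i + 1) = x i - η • (v i - ξ i))
    (hξ : ∀ i < N, ‖ξ i‖ ≤ r) :
    ∀ J ≤ N, ‖x J - x 0‖ ^ 2 ≤
      8 * η * J * (f (x 0) - f (x J)
        + η * ∑ i ∈ Finset.range J, ‖v i - gradient f (x i)‖ ^ 2
        + η * J * r ^ 2) := by
  intro J hJ
  set A := f (x 0) - f (x J) + η * ∑ i ∈ range J, ‖v i - gradient f (x i)‖ ^ 2 + η * J * r ^ 2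
  have hsteps : ∑ i ∈ range J, ‖x (i + 1) - x i‖ ^ 2 ≤ 4 * η * A := by
    calc ∑ i ∈ range J, ‖x (i + 1) - x i‖ ^ 2
        ≤ ∑ i ∈ range J, (4 * η * (f (x i) - f (x (i + 1)))
            + 4 * η ^ 2 * (‖v i - gradient f (x i)‖ ^ 2 + r ^ 2)) := by
          refine sum_le_sum fun i hi => ?_
          have hiN : i < N := (mem_range.mp hi).trans_le hJ
          rw [hupd i hiN, sub_sub_cancel_left, norm_neg]
          exact sq_norm_perturbed_step_le hf hlip hη hηL (hξ i hiN)
      _ = 4 * η * A := by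
          rw [sum_add_distrib, ← mul_sum, sum_range_sub' (fun i => f (x i)), ← mul_sum,
            sum_add_distrib, sum_const, card_range, nsmul_eq_mul]
          ring
  have hA : 0 ≤ A := by
    nlinarith [sum_nonneg fun i (_ : i ∈ range J) => sq_nonneg ‖x (i + 1) - x i‖]
  calc ‖x J - x 0‖ ^ 2 ≤ J * ∑ i ∈ range J, ‖x (i + 1) - x i‖ ^ 2 :=
        sq_norm_sub_le_mul_sum_sq_norm_sub x J
    _ ≤ J * (4 * η * A) := by gcongr
    _ ≤ 8 * η * J * A := by nlinarith [mul_nonneg (mul_nonneg J.cast_nonneg hη.le) hA]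

/-- "Improve or localize": along the perturbed update
`x_{i+1} = x_i - η (v_i - ξ_i)` with `‖ξ_i‖ ≤ r` and `ηL ≤ 1/4`, for every
`J ≤ N` one has
`‖x_J - x_0‖² ≤ 8ηJ (f x₀ - f x_J + η ∑_{i<J} ‖v_i - ∇f x_i‖² + ηJ r²)`. -/
theorem stmt_3 {d : ℕ} (f : EuclideanSpace ℝ (Fin d) → ℝ) (L : ℝ) (hL : 0 ≤ L)
    (hf : Differentiable ℝ f)
    (hlip : ∀ x y : EuclideanSpace ℝ (Fin d),
      ‖gradient f x - gradient f y‖ ≤ L * ‖x - y‖)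
    (η r : ℝ) (hη : 0 < η) (hηL : η * L ≤ 1 / 4) (hr : 0 ≤ r) (N : ℕ)
    (x v ξ : ℕ → EuclideanSpace ℝ (Fin d))
    (hupd : ∀ i < N, x (i + 1) = x i - η • (v i - ξ i))
    (hξ : ∀ i < N, ‖ξ i‖ ≤ r) :
    ∀ J ≤ N, ‖x J - x 0‖ ^ 2 ≤
      8 * η * J * (f (x 0) - f (x J)
        + η * ∑ i ∈ Finset.range J, ‖v i - gradient f (x i)‖ ^ 2
        + η * J * r ^ 2) :=
  stmt_3_general f L hf hlip η r hη hηL N x v ξ hupd hξ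
end

section
/- Let φ, ψ : ℝ^d → ℝ be twice differentiable, each with L-Lipschitz gradient and each ρ-Hessian Lipschitz (L, ρ ≥ 0). Then for all x̃, a, a', b, b' ∈ ℝ^d, setting M = max{‖a − x̃‖, ‖a' − x̃‖, ‖b − x̃‖, ‖b' − x̃‖}, one has ‖(∇φ(a) − ∇φ(a')) − (∇φ(b) − ∇φ(b')) − (∇ψ(a) − ∇ψ(a')) + (∇ψ(b) − ∇ψ(b'))‖ ≤ 2L‖(a − a') − (b − b')‖ + 2ρM(‖a − a'‖ + ‖b − b'‖). -/
open Metric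

lemma key_bound {d : ℕ} (G : EuclideanSpace ℝ (Fin d) → EuclideanSpace ℝ (Fin d))
    (L ρ : ℝ) (hL : 0 ≤ L) (hρ : 0 ≤ ρ)
    (hG : Differentiable ℝ G)
    (hlip : ∀ x y, ‖G x - G y‖ ≤ L * ‖x - y‖)
    (hhess : ∀ x y, ‖fderiv ℝ G x - fderiv ℝ G y‖ ≤ ρ * ‖x - y‖)
    (xt a a' b b' : EuclideanSpace ℝ (Fin d))
    (M : ℝ) (ha : ‖a - xt‖ ≤ M) (ha' : ‖a' - xt‖ ≤ M)
    (hb : ‖b - xt‖ ≤ M) (hb' : ‖b' - xt‖ ≤ M) :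
    ‖(G a - G a') - (G b - G b')‖ ≤
      L * ‖(a - a') - (b - b')‖ + ρ * M * (‖a - a'‖ + ‖b - b'‖) := by
  set T := fderiv ℝ G xt with hT
  set F : EuclideanSpace ℝ (Fin d) → EuclideanSpace ℝ (Fin d) :=
    fun x => G x - T x + T xt with hF
  have hFderiv : ∀ x, HasFDerivAt F (fderiv ℝ G x - T) x := by
    intro x
    exact (((hG x).hasFDerivAt.sub T.hasFDerivAt).add_const (T xt))
  -- Lipschitz bound of F on closed ball
  have hball : ∀ x y : EuclideanSpace ℝ (Fin d), x ∈ closedBall xt M →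
      y ∈ closedBall xt M → ‖F y - F x‖ ≤ ρ * M * ‖y - x‖ := by
    intro x y hx hy
    apply Convex.norm_image_sub_le_of_norm_hasFDerivWithin_le
      (f' := fun x => fderiv ℝ G x - T)
      (fun z _ => (hFderiv z).hasFDerivWithinAt) ?_ (convex_closedBall xt M) hx hy
    intro z hz
    calc ‖fderiv ℝ G z - T‖ ≤ ρ * ‖z - xt‖ := hhess z xt
      _ ≤ ρ * M := by
          apply mul_le_mul_of_nonneg_left _ hρ
          simpa [dist_eq_norm] using hz
  have hmem : ∀ z : EuclideanSpace ℝ (Fin d), ‖z - xt‖ ≤ M → z ∈ closedBall xt M := by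
    intro z hz; simpa [dist_eq_norm] using hz
  have hFa := hball a' a (hmem a' ha') (hmem a ha)
  have hFb := hball b' b (hmem b' hb') (hmem b hb)
  have hTnorm : ‖T‖ ≤ L := by
    apply norm_fderiv_le_of_lip' ℝ hL
    filter_upwards with x using hlip x xt
  have hrewrite : (G a - G a') - (G b - G b') =
      ((F a - F a') - (F b - F b')) + T ((a - a') - (b - b')) := by
    simp only [hF]
    rw [map_sub, map_sub, map_sub]
    abel
  rw [hrewrite]
  calc ‖((F a - F a') - (F b - F b')) + T ((a - a') - (b - b'))‖
      ≤ ‖(F a - F a') - (F b - F b')‖ + ‖T ((a - a') - (b - b'))‖ := norm_add_le _ _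
    _ ≤ (‖F a - F a'‖ + ‖F b - F b'‖) + L * ‖(a - a') - (b - b')‖ := by
        gcongr
        · exact norm_sub_le _ _
        · exact (T.le_opNorm _).trans (by gcongr)
    _ ≤ (ρ * M * ‖a - a'‖ + ρ * M * ‖b - b'‖) + L * ‖(a - a') - (b - b')‖ := by
        gcongr <;> assumption
    _ = L * ‖(a - a') - (b - b')‖ + ρ * M * (‖a - a'‖ + ‖b - b'‖) := by ring

/-- Fourth-difference gradient bound for two `L`-smooth, `ρ`-Hessian-Lipschitz
functions `φ` and `ψ`. -/
theorem stmt_8 {d : ℕ} (φ ψ : EuclideanSpace ℝ (Fin d) → ℝ) (L ρ : ℝ)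
    (hL : 0 ≤ L) (hρ : 0 ≤ ρ)
    (hφ : Differentiable ℝ φ) (hφ' : Differentiable ℝ (gradient φ))
    (hψ : Differentiable ℝ ψ) (hψ' : Differentiable ℝ (gradient ψ))
    (hφlip : ∀ x y : EuclideanSpace ℝ (Fin d),
      ‖gradient φ x - gradient φ y‖ ≤ L * ‖x - y‖)
    (hψlip : ∀ x y : EuclideanSpace ℝ (Fin d),
      ‖gradient ψ x - gradient ψ y‖ ≤ L * ‖x - y‖)
    (hφhess : ∀ x y : EuclideanSpace ℝ (Fin d),
      ‖fderiv ℝ (gradient φ) x - fderiv ℝ (gradient φ) y‖ ≤ ρ * ‖x - y‖)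
    (hψhess : ∀ x y : EuclideanSpace ℝ (Fin d),
      ‖fderiv ℝ (gradient ψ) x - fderiv ℝ (gradient ψ) y‖ ≤ ρ * ‖x - y‖) :
    ∀ xt a a' b b' : EuclideanSpace ℝ (Fin d),
      ‖(gradient φ a - gradient φ a') - (gradient φ b - gradient φ b')
          - (gradient ψ a - gradient ψ a') + (gradient ψ b - gradient ψ b')‖ ≤
        2 * L * ‖(a - a') - (b - b')‖
          + 2 * ρ * max (max ‖a - xt‖ ‖a' - xt‖) (max ‖b - xt‖ ‖b' - xt‖)
            * (‖a - a'‖ + ‖b - b'‖) := by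
  intro xt a a' b b'
  set M := max (max ‖a - xt‖ ‖a' - xt‖) (max ‖b - xt‖ ‖b' - xt‖) with hM
  have ha : ‖a - xt‖ ≤ M := le_max_of_le_left (le_max_left _ _)
  have ha' : ‖a' - xt‖ ≤ M := le_max_of_le_left (le_max_right _ _)
  have hb : ‖b - xt‖ ≤ M := le_max_of_le_right (le_max_left _ _)
  have hb' : ‖b' - xt‖ ≤ M := le_max_of_le_right (le_max_right _ _)
  have h1 := key_bound (gradient φ) L ρ hL hρ hφ' hφlip hφhess xt a a' b b' M ha ha' hb hb'
  have h2 := key_bound (gradient ψ) L ρ hL hρ hψ' hψlip hψhess xt a a' b b' M ha ha' hb hb'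
  have htri : ‖(gradient φ a - gradient φ a') - (gradient φ b - gradient φ b')
      - (gradient ψ a - gradient ψ a') + (gradient ψ b - gradient ψ b')‖ ≤
      ‖(gradient φ a - gradient φ a') - (gradient φ b - gradient φ b')‖ +
      ‖(gradient ψ a - gradient ψ a') - (gradient ψ b - gradient ψ b')‖ := by
    have : (gradient φ a - gradient φ a') - (gradient φ b - gradient φ b')
      - (gradient ψ a - gradient ψ a') + (gradient ψ b - gradient ψ b') =
      ((gradient φ a - gradient φ a') - (gradient φ b - gradient φ b'))
      - ((gradient ψ a - gradient ψ a') - (gradient ψ b - gradient ψ b')) := by abel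
    rw [this]
    exact norm_sub_le _ _
  calc _ ≤ _ := htri
    _ ≤ (L * ‖(a - a') - (b - b')‖ + ρ * M * (‖a - a'‖ + ‖b - b'‖))
        + (L * ‖(a - a') - (b - b')‖ + ρ * M * (‖a - a'‖ + ‖b - b'‖)) := add_le_add h1 h2
    _ = 2 * L * ‖(a - a') - (b - b')‖ + 2 * ρ * M * (‖a - a'‖ + ‖b - b'‖) := by ring
end

section
/- Let φ, ψ : ℝ^d → ℝ be twice differentiable and each ρ-Hessian Lipschitz (ρ ≥ 0), and let x̃ ∈ ℝ^d satisfy ‖∇²φ(x̃) − ∇²ψ(x̃)‖ ≤ ζ. Then for all a, a', b, b' ∈ ℝ^d, setting M = max{‖a − x̃‖, ‖a' − x̃‖, ‖b − x̃‖, ‖b' − x̃‖}, one has ‖(∇φ(a) − ∇φ(a')) − (∇φ(b) − ∇φ(b')) − (∇ψ(a) − ∇ψ(a')) + (∇ψ(b) − ∇ψ(b'))‖ ≤ ζ‖(a − a') − (b − b')‖ + 2ρM(‖a − a'‖ + ‖b − b'‖). -/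
/-- Fourth-difference gradient bound for two `ρ`-Hessian-Lipschitz functions
with Hessian heterogeneity `ζ` at the reference point `x̃`. -/
theorem stmt_9 {d : ℕ} (φ ψ : EuclideanSpace ℝ (Fin d) → ℝ) (ρ ζ : ℝ)
    (hρ : 0 ≤ ρ)
    (hφ : Differentiable ℝ φ) (hφ' : Differentiable ℝ (gradient φ))
    (hψ : Differentiable ℝ ψ) (hψ' : Differentiable ℝ (gradient ψ))
    (hφhess : ∀ x y : EuclideanSpace ℝ (Fin d),
      ‖fderiv ℝ (gradient φ) x - fderiv ℝ (gradient φ) y‖ ≤ ρ * ‖x - y‖)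
    (hψhess : ∀ x y : EuclideanSpace ℝ (Fin d),
      ‖fderiv ℝ (gradient ψ) x - fderiv ℝ (gradient ψ) y‖ ≤ ρ * ‖x - y‖)
    (xt : EuclideanSpace ℝ (Fin d))
    (hζ : ‖fderiv ℝ (gradient φ) xt - fderiv ℝ (gradient ψ) xt‖ ≤ ζ) :
    ∀ a a' b b' : EuclideanSpace ℝ (Fin d),
      ‖(gradient φ a - gradient φ a') - (gradient φ b - gradient φ b')
          - (gradient ψ a - gradient ψ a') + (gradient ψ b - gradient ψ b')‖ ≤
        ζ * ‖(a - a') - (b - b')‖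
          + 2 * ρ * max (max ‖a - xt‖ ‖a' - xt‖) (max ‖b - xt‖ ‖b' - xt‖)
            * (‖a - a'‖ + ‖b - b'‖) := by
  intro a a' b b'
  set H : EuclideanSpace ℝ (Fin d) →L[ℝ] EuclideanSpace ℝ (Fin d) :=
    fderiv ℝ (gradient φ) xt - fderiv ℝ (gradient ψ) xt with hH
  set M : ℝ := max (max ‖a - xt‖ ‖a' - xt‖) (max ‖b - xt‖ ‖b' - xt‖) with hM
  set f : EuclideanSpace ℝ (Fin d) → EuclideanSpace ℝ (Fin d) :=
    fun y => (gradient φ y - gradient ψ y) - H y with hf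
  have hdiff : ∀ y, HasFDerivAt f
      (fderiv ℝ (gradient φ) y - fderiv ℝ (gradient ψ) y - H) y := by
    intro y
    exact (((hφ'.differentiableAt (x := y)).hasFDerivAt.sub
      (hψ'.differentiableAt (x := y)).hasFDerivAt).sub H.hasFDerivAt)
  -- bound on derivative of f within the closed ball of radius M around xt
  have key : ∀ u v : EuclideanSpace ℝ (Fin d), ‖u - xt‖ ≤ M → ‖v - xt‖ ≤ M →
      ‖f u - f v‖ ≤ 2 * ρ * M * ‖u - v‖ := by
    intro u v hu hv
    have := (convex_closedBall xt M).norm_image_sub_le_of_norm_hasFDerivWithin_le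
      (f := f) (C := 2 * ρ * M)
      (fun y hy => ((hdiff y).hasFDerivWithinAt))
      (fun y hy => by
        have hy' : ‖y - xt‖ ≤ M := by
          simpa [dist_eq_norm] using Metric.mem_closedBall.mp hy
        calc ‖fderiv ℝ (gradient φ) y - fderiv ℝ (gradient ψ) y - H‖
            = ‖(fderiv ℝ (gradient φ) y - fderiv ℝ (gradient φ) xt)
              - (fderiv ℝ (gradient ψ) y - fderiv ℝ (gradient ψ) xt)‖ := by
              rw [hH]; congr 1; abel
          _ ≤ ‖fderiv ℝ (gradient φ) y - fderiv ℝ (gradient φ) xt‖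
              + ‖fderiv ℝ (gradient ψ) y - fderiv ℝ (gradient ψ) xt‖ :=
              norm_sub_le _ _
          _ ≤ ρ * ‖y - xt‖ + ρ * ‖y - xt‖ := add_le_add (hφhess y xt) (hψhess y xt)
          _ ≤ ρ * M + ρ * M := by
              have := mul_le_mul_of_nonneg_left hy' hρ
              exact add_le_add this this
          _ = 2 * ρ * M := by ring)
      (Metric.mem_closedBall.mpr (by simpa [dist_eq_norm] using hv))
      (Metric.mem_closedBall.mpr (by simpa [dist_eq_norm] using hu))
    simpa using this
  have haM : ‖a - xt‖ ≤ M := le_max_of_le_left (le_max_left _ _)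
  have ha'M : ‖a' - xt‖ ≤ M := le_max_of_le_left (le_max_right _ _)
  have hbM : ‖b - xt‖ ≤ M := le_max_of_le_right (le_max_left _ _)
  have hb'M : ‖b' - xt‖ ≤ M := le_max_of_le_right (le_max_right _ _)
  have h1 : ‖f a - f a'‖ ≤ 2 * ρ * M * ‖a - a'‖ := key a a' haM ha'M
  have h2 : ‖f b - f b'‖ ≤ 2 * ρ * M * ‖b - b'‖ := key b b' hbM hb'M
  have h3 : ‖H ((a - a') - (b - b'))‖ ≤ ζ * ‖(a - a') - (b - b')‖ :=
    le_trans (H.le_opNorm _) (mul_le_mul_of_nonneg_right hζ (norm_nonneg _))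
  have heq : (gradient φ a - gradient φ a') - (gradient φ b - gradient φ b')
          - (gradient ψ a - gradient ψ a') + (gradient ψ b - gradient ψ b')
      = (f a - f a') - (f b - f b') + H ((a - a') - (b - b')) := by
    simp only [hf, map_sub]
    abel
  rw [heq]
  calc ‖(f a - f a') - (f b - f b') + H ((a - a') - (b - b'))‖
      ≤ ‖(f a - f a') - (f b - f b')‖ + ‖H ((a - a') - (b - b'))‖ := norm_add_le _ _
    _ ≤ ‖f a - f a'‖ + ‖f b - f b'‖ + ‖H ((a - a') - (b - b'))‖ := by
        gcongr; exact norm_sub_le _ _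
    _ ≤ 2 * ρ * M * ‖a - a'‖ + 2 * ρ * M * ‖b - b'‖ + ζ * ‖(a - a') - (b - b')‖ := by
        gcongr
    _ = ζ * ‖(a - a') - (b - b')‖ + 2 * ρ * M * (‖a - a'‖ + ‖b - b'‖) := by ring
end

section
/- (Variance of the variance-reduced gradient difference.) Let Z be a nonempty finite type, let p : Z → ℝ be nonnegative weights with ∑_{z ∈ Z} p(z) = 1, and for each z ∈ Z let ℓ_z : ℝ^d → ℝ be differentiable with L-Lipschitz gradient (L ≥ 0). Define f = ∑_{z ∈ Z} p(z) · ℓ_z. Then for all x, y ∈ ℝ^d, ∑_{z ∈ Z} p(z) ‖∇ℓ_z(x) − ∇ℓ_z(y) − (∇f(x) − ∇f(y))‖² ≤ L² ‖x − y‖². -/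
/-!
The gradient differences `g z = ∇ℓ_z x - ∇ℓ_z y` have `p`-weighted mean `∇f x - ∇f y`, so the
left-hand side is their weighted variance. A variance is at most the weighted second moment
`∑ p z ‖g z‖²`, and each `‖g z‖ ≤ L ‖x - y‖` by smoothness.
-/

open Finset

section WeightedVariance

variable {ι E : Type*} [NormedAddCommGroup E] [InnerProductSpace ℝ E]

theorem sum_mul_norm_sub_sum_smul_sq (s : Finset ι) (p : ι → ℝ) (hp1 : ∑ i ∈ s, p i = 1)
    (g : ι → E) :
    ∑ i ∈ s, p i * ‖g i - ∑ j ∈ s, p j • g j‖ ^ 2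
      = ∑ i ∈ s, p i * ‖g i‖ ^ 2 - ‖∑ j ∈ s, p j • g j‖ ^ 2 := by
  set G := ∑ j ∈ s, p j • g j
  have hG : ∑ i ∈ s, p i * inner ℝ (g i) G = ‖G‖ ^ 2 := by
    simp only [← real_inner_smul_left, ← sum_inner, real_inner_self_eq_norm_sq, G]
  calc ∑ i ∈ s, p i * ‖g i - G‖ ^ 2
      = ∑ i ∈ s, (p i * ‖g i‖ ^ 2 - 2 * (p i * inner ℝ (g i) G) + p i * ‖G‖ ^ 2) := by
        refine sum_congr rfl fun i _ => ?_
        rw [norm_sub_sq_real]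
        ring
    _ = ∑ i ∈ s, p i * ‖g i‖ ^ 2 - 2 * ∑ i ∈ s, p i * inner ℝ (g i) G
          + (∑ i ∈ s, p i) * ‖G‖ ^ 2 := by
        rw [sum_add_distrib, sum_sub_distrib, ← mul_sum, ← sum_mul]
    _ = ∑ i ∈ s, p i * ‖g i‖ ^ 2 - ‖G‖ ^ 2 := by
        rw [hG, hp1]
        ring

theorem sum_mul_norm_sub_sum_smul_sq_le (s : Finset ι) (p : ι → ℝ) (hp1 : ∑ i ∈ s, p i = 1)
    (g : ι → E) :
    ∑ i ∈ s, p i * ‖g i - ∑ j ∈ s, p j • g j‖ ^ 2 ≤ ∑ i ∈ s, p i * ‖g i‖ ^ 2 := by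
  rw [sum_mul_norm_sub_sum_smul_sq s p hp1]
  linarith [sq_nonneg ‖∑ j ∈ s, p j • g j‖]

end WeightedVariance

theorem gradient_sum_mul {ι F : Type*} [NormedAddCommGroup F] [InnerProductSpace ℝ F]
    [CompleteSpace F] (s : Finset ι) (p : ι → ℝ) {ℓ : ι → F → ℝ} {x : F}
    (hdiff : ∀ i ∈ s, DifferentiableAt ℝ (ℓ i) x) :
    gradient (fun x => ∑ i ∈ s, p i * ℓ i x) x = ∑ i ∈ s, p i • gradient (ℓ i) x := by
  refine HasGradientAt.gradient ?_
  rw [hasGradientAt_iff_hasFDerivAt, map_sum]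
  refine (HasFDerivAt.fun_sum fun i hi =>
    (hdiff i hi).hasFDerivAt.const_mul (p i)).congr_fderiv ?_
  simp only [map_smul, gradient, LinearIsometryEquiv.apply_symm_apply]

theorem stmt_10_general {d : ℕ} (Z : Type*) [Fintype Z]
    (p : Z → ℝ) (hp : ∀ z, 0 ≤ p z) (hp1 : ∑ z, p z = 1)
    (ℓ : Z → EuclideanSpace ℝ (Fin d) → ℝ) (L : ℝ)
    (hdiff : ∀ z, Differentiable ℝ (ℓ z))
    (hlip : ∀ z, ∀ x y : EuclideanSpace ℝ (Fin d),
      ‖gradient (ℓ z) x - gradient (ℓ z) y‖ ≤ L * ‖x - y‖)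
    (f : EuclideanSpace ℝ (Fin d) → ℝ) (hf : f = fun x => ∑ z, p z * ℓ z x) :
    ∀ x y : EuclideanSpace ℝ (Fin d),
      ∑ z, p z *
          ‖gradient (ℓ z) x - gradient (ℓ z) y - (gradient f x - gradient f y)‖ ^ 2
        ≤ L ^ 2 * ‖x - y‖ ^ 2 := by
  intro x y
  have hmean : gradient f x - gradient f y
      = ∑ z, p z • (gradient (ℓ z) x - gradient (ℓ z) y) := by
    simp only [hf, gradient_sum_mul _ p fun z _ => hdiff z _, smul_sub, sum_sub_distrib]
  calc _ ≤ ∑ z, p z * ‖gradient (ℓ z) x - gradient (ℓ z) y‖ ^ 2 := by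
        rw [hmean]
        exact sum_mul_norm_sub_sum_smul_sq_le _ p hp1 _
    _ ≤ ∑ z, p z * (L * ‖x - y‖) ^ 2 := by
        gcongr with z
        · exact hp z
        · exact hlip z x y
    _ = L ^ 2 * ‖x - y‖ ^ 2 := by
        rw [← sum_mul, hp1]
        ring

/-- Variance of the variance-reduced gradient difference: for a weighted finite
mixture `f = ∑ z, p z • ℓ z` of `L`-smooth functions,
`∑ z, p z ‖∇ℓ_z x - ∇ℓ_z y - (∇f x - ∇f y)‖² ≤ L² ‖x - y‖²`. -/
theorem stmt_10 {d : ℕ} (Z : Type*) [Fintype Z] [Nonempty Z]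
    (p : Z → ℝ) (hp : ∀ z, 0 ≤ p z) (hp1 : ∑ z, p z = 1)
    (ℓ : Z → EuclideanSpace ℝ (Fin d) → ℝ) (L : ℝ) (hL : 0 ≤ L)
    (hdiff : ∀ z, Differentiable ℝ (ℓ z))
    (hlip : ∀ z, ∀ x y : EuclideanSpace ℝ (Fin d),
      ‖gradient (ℓ z) x - gradient (ℓ z) y‖ ≤ L * ‖x - y‖)
    (f : EuclideanSpace ℝ (Fin d) → ℝ) (hf : f = fun x => ∑ z, p z * ℓ z x) :
    ∀ x y : EuclideanSpace ℝ (Fin d),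
      ∑ z, p z *
          ‖gradient (ℓ z) x - gradient (ℓ z) y - (gradient f x - gradient f y)‖ ^ 2
        ≤ L ^ 2 * ‖x - y‖ ^ 2 :=
  stmt_10_general Z p hp hp1 ℓ L hdiff hlip f hf
end

section
/- (Coefficient-counting lemma for nested local updates.) Let K, T ≥ 1 be natural numbers. For a natural number i, let s(i) = ⌊i/(KT)⌋ and t(i) = ⌊(i − KT·s(i))/K⌋, and define the block starts β₁(i) = K·t(i) + KT·s(i) and β₂(i) = KT·s(i). Let a : ℕ → ℝ be a nonnegative sequence, let M ≥ 2, and let ι_1 < ι_2 < ⋯ < ι_M be a strictly increasing sequence of natural numbers with ι_1 = 0. Then ∑_{m=1}^{M−1} [ (min{ι_{m+1} − ι_m, K}/K) · ∑_{i=β₁(ι_m)}^{ι_m − 1} a_i + (min{ι_{m+1} − ι_m, KT}/(KT)) · ∑_{i=β₂(ι_m)}^{β₁(ι_m) − 1} a_i ] ≤ 4 · ∑_{i=0}^{ι_M − 1} a_i. -/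
/-- Index of the outer block (communication stage) containing iteration `i`. -/
def sIdx (K T i : ℕ) : ℕ := i / (K * T)

/-- Index of the inner block (local round) containing iteration `i`. -/
def tIdx (K T i : ℕ) : ℕ := (i - K * T * sIdx K T i) / K

/-- Start of the inner block containing iteration `i`. -/
def beta1 (K T i : ℕ) : ℕ := K * tIdx K T i + K * T * sIdx K T i

/-- Start of the outer block containing iteration `i`. -/
def beta2 (K T i : ℕ) : ℕ := K * T * sIdx K T i

lemma beta1_eq (K T x : ℕ) (hK : 1 ≤ K) : beta1 K T x = K * (x / K) := by
  unfold beta1 tIdx sIdx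
  have hmod : x - K * T * (x / (K * T)) = x % (K * T) := by
    rw [Nat.mod_def]
  rw [hmod]
  have hx : x = K * (T * (x / (K * T))) + x % (K * T) := by
    rw [← mul_assoc]
    exact (Nat.div_add_mod x (K * T)).symm
  conv_rhs => rw [hx, Nat.mul_add_div hK]
  ring

lemma beta2_eq (K T x : ℕ) : beta2 K T x = (K * T) * (x / (K * T)) := rfl

lemma mono_ι (M : ℕ) (ι : ℕ → ℕ)
    (hmono : ∀ m, 1 ≤ m → m < M → ι m < ι (m + 1)) :
    ∀ m n, 1 ≤ m → m ≤ n → n ≤ M → ι m ≤ ι n := by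
  intro m n hm hmn hnM
  induction n with
  | zero => omega
  | succ n ih =>
    rcases Nat.eq_or_lt_of_le hmn with h | h
    · rw [h]
    · have h1 : m ≤ n := by omega
      have h2 : ι m ≤ ι n := ih h1 (by omega)
      have h3 : ι n < ι (n + 1) := hmono n (by omega) (by omega)
      omega

/-- Per-index weight bound, in ℕ. -/
lemma weight_bound (B M i : ℕ) (hB : 1 ≤ B) (ι : ℕ → ℕ)
    (hmono : ∀ m, 1 ≤ m → m < M → ι m < ι (m + 1)) :
    (∑ m ∈ Finset.Icc 1 (M - 1),
        if B * (ι m / B) ≤ i ∧ i < ι m then min (ι (m + 1) - ι m) B else 0) ≤ 2 * B := by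
  classical
  have hle := mono_ι M ι hmono
  rw [← Finset.sum_filter]
  set S := (Finset.Icc 1 (M - 1)).filter (fun m => B * (ι m / B) ≤ i ∧ i < ι m) with hSdef
  rcases S.eq_empty_or_nonempty with hS | hS
  · rw [hS]; simp
  set m0 := S.max' hS with hm0def
  have hm0S : m0 ∈ S := S.max'_mem hS
  have hmem : ∀ m ∈ S, (1 ≤ m ∧ m ≤ M - 1) ∧ B * (ι m / B) ≤ i ∧ i < ι m := by
    intro m hm
    simp only [hSdef, Finset.mem_filter, Finset.mem_Icc] at hm
    exact hm
  -- all ι m for m ∈ S are in block [β, β+B) with β = B*(i/B), and > i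
  have hblock : ∀ m ∈ S, i + 1 ≤ ι m ∧ ι m < B * (i / B) + B := by
    intro m hm
    obtain ⟨⟨hm1, hm2⟩, h3, h4⟩ := hmem m hm
    have h5 : ι m < B * (ι m / B) + B := by
      have := Nat.div_add_mod (ι m) B
      have := Nat.mod_lt (ι m) (show 0 < B by omega)
      omega
    have hdiv : i / B = ι m / B := by
      apply Nat.div_eq_of_lt_le
      · rw [mul_comm]; omega
      · rw [add_mul, one_mul, mul_comm]; omega
    rw [hdiv]
    omega
  have hmax : ∀ m ∈ S.erase m0, m + 1 ≤ m0 := by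
    intro m hm
    have h1 : m ≠ m0 := (Finset.mem_erase.mp hm).1
    have h2 : m ≤ m0 := S.le_max' m (Finset.mem_erase.mp hm).2
    omega
  rw [← Finset.add_sum_erase S _ hm0S]
  have h1 : min (ι (m0 + 1) - ι m0) B ≤ B := min_le_right _ _
  have h2 : (∑ m ∈ S.erase m0, min (ι (m + 1) - ι m) B) ≤ B := by
    have step1 : (∑ m ∈ S.erase m0, min (ι (m + 1) - ι m) B)
        ≤ ∑ m ∈ S.erase m0, (Finset.Ico (ι m) (ι (m + 1))).card := by
      apply Finset.sum_le_sum
      intro m hm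
      rw [Nat.card_Ico]
      exact min_le_left _ _
    have hdisj : ∀ m ∈ S.erase m0, ∀ m' ∈ S.erase m0, m ≠ m' →
        Disjoint (Finset.Ico (ι m) (ι (m + 1))) (Finset.Ico (ι m') (ι (m' + 1))) := by
      intro m hm m' hm' hne
      have key : ∀ u v : ℕ, u ∈ S.erase m0 → v ∈ S.erase m0 → u < v →
          Disjoint (Finset.Ico (ι u) (ι (u + 1))) (Finset.Ico (ι v) (ι (v + 1))) := by
        intro u v hu hv huv
        have h1 : 1 ≤ v := ((hmem v (Finset.mem_erase.mp hv).2).1).1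
        have h2 : v ≤ M - 1 := ((hmem v (Finset.mem_erase.mp hv).2).1).2
        have h3 : ι (u + 1) ≤ ι v := hle (u + 1) v (by omega) (by omega) (by omega)
        rw [Finset.disjoint_left]
        intro x hx hx'
        simp only [Finset.mem_Ico] at hx hx'
        omega
      rcases lt_or_gt_of_ne hne with h | h
      · exact key m m' hm hm' h
      · exact (key m' m hm' hm h).symm
    have step2 : ∑ m ∈ S.erase m0, (Finset.Ico (ι m) (ι (m + 1))).card
        = ((S.erase m0).biUnion (fun m => Finset.Ico (ι m) (ι (m + 1)))).card :=
      (Finset.card_biUnion hdisj).symm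
    have step3 : ((S.erase m0).biUnion (fun m => Finset.Ico (ι m) (ι (m + 1)))).card
        ≤ (Finset.Ico (i + 1) (B * (i / B) + B)).card := by
      apply Finset.card_le_card
      intro x hx
      rw [Finset.mem_biUnion] at hx
      obtain ⟨m, hm, hxm⟩ := hx
      have hmS := (Finset.mem_erase.mp hm).2
      have hb := hblock m hmS
      have hb0 := hblock m0 hm0S
      have hup : ι (m + 1) ≤ ι m0 := by
        have h1 : 1 ≤ m0 := ((hmem m0 hm0S).1).1
        have h2 : m0 ≤ M - 1 := ((hmem m0 hm0S).1).2
        exact hle (m + 1) m0 (by omega) (hmax m hm) (by omega)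
      simp only [Finset.mem_Ico] at hxm ⊢
      omega
    have step4 : (Finset.Ico (i + 1) (B * (i / B) + B)).card ≤ B := by
      rw [Nat.card_Ico]
      have : B * (i / B) ≤ i := Nat.mul_div_le i B
      omega
    omega
  omega

/-- Key lemma: for block size `B`, the weighted partial block sums are at most twice the
total. -/
lemma keyB (B : ℕ) (hB : 1 ≤ B) (a : ℕ → ℝ) (ha : ∀ i, 0 ≤ a i)
    (M : ℕ) (ι : ℕ → ℕ)
    (hmono : ∀ m, 1 ≤ m → m < M → ι m < ι (m + 1)) :
    ∑ m ∈ Finset.Icc 1 (M - 1),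
        ((min (ι (m + 1) - ι m) B : ℕ) : ℝ) / (B : ℝ) *
          ∑ i ∈ Finset.Ico (B * (ι m / B)) (ι m), a i
      ≤ 2 * ∑ i ∈ Finset.range (ι M), a i := by
  classical
  have hle := mono_ι M ι hmono
  have hBpos : (0 : ℝ) < (B : ℝ) := by exact_mod_cast hB
  have hstep1 : ∑ m ∈ Finset.Icc 1 (M - 1),
        ((min (ι (m + 1) - ι m) B : ℕ) : ℝ) / (B : ℝ) *
          ∑ i ∈ Finset.Ico (B * (ι m / B)) (ι m), a i
      = ∑ m ∈ Finset.Icc 1 (M - 1), ∑ i ∈ Finset.range (ι M),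
          (if B * (ι m / B) ≤ i ∧ i < ι m
            then ((min (ι (m + 1) - ι m) B : ℕ) : ℝ) / (B : ℝ) else 0) * a i := by
    apply Finset.sum_congr rfl
    intro m hm
    rw [Finset.mem_Icc] at hm
    have hιM : ι m ≤ ι M := hle m M hm.1 (by omega) le_rfl
    have hset : Finset.Ico (B * (ι m / B)) (ι m)
        = (Finset.range (ι M)).filter (fun i => B * (ι m / B) ≤ i ∧ i < ι m) := by
      ext x
      simp only [Finset.mem_Ico, Finset.mem_filter, Finset.mem_range]
      omega
    rw [hset, Finset.mul_sum, Finset.sum_filter]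
    apply Finset.sum_congr rfl
    intro i _
    split_ifs <;> simp
  rw [hstep1, Finset.sum_comm]
  have hstep2 : ∀ i, (∑ m ∈ Finset.Icc 1 (M - 1),
        (if B * (ι m / B) ≤ i ∧ i < ι m
          then ((min (ι (m + 1) - ι m) B : ℕ) : ℝ) / (B : ℝ) else 0)) ≤ 2 := by
    intro i
    have heq : (∑ m ∈ Finset.Icc 1 (M - 1),
        (if B * (ι m / B) ≤ i ∧ i < ι m
          then ((min (ι (m + 1) - ι m) B : ℕ) : ℝ) / (B : ℝ) else 0))
        = ((∑ m ∈ Finset.Icc 1 (M - 1),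
            if B * (ι m / B) ≤ i ∧ i < ι m then min (ι (m + 1) - ι m) B else 0 : ℕ) : ℝ)
            / (B : ℝ) := by
      push_cast
      rw [Finset.sum_div]
      apply Finset.sum_congr rfl
      intro m _
      split_ifs <;> simp
    rw [heq, div_le_iff₀ hBpos]
    have := weight_bound B M i hB ι hmono
    calc ((∑ m ∈ Finset.Icc 1 (M - 1),
            if B * (ι m / B) ≤ i ∧ i < ι m then min (ι (m + 1) - ι m) B else 0 : ℕ) : ℝ)
        ≤ ((2 * B : ℕ) : ℝ) := by exact_mod_cast this
      _ = 2 * (B : ℝ) := by push_cast; ring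
  calc ∑ i ∈ Finset.range (ι M), ∑ m ∈ Finset.Icc 1 (M - 1),
        (if B * (ι m / B) ≤ i ∧ i < ι m
          then ((min (ι (m + 1) - ι m) B : ℕ) : ℝ) / (B : ℝ) else 0) * a i
      = ∑ i ∈ Finset.range (ι M), (∑ m ∈ Finset.Icc 1 (M - 1),
          if B * (ι m / B) ≤ i ∧ i < ι m
            then ((min (ι (m + 1) - ι m) B : ℕ) : ℝ) / (B : ℝ) else 0) * a i := by
        apply Finset.sum_congr rfl
        intro i _
        rw [Finset.sum_mul]
    _ ≤ ∑ i ∈ Finset.range (ι M), 2 * a i := by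
        apply Finset.sum_le_sum
        intro i _
        exact mul_le_mul_of_nonneg_right (hstep2 i) (ha i)
    _ = 2 * ∑ i ∈ Finset.range (ι M), a i := by rw [Finset.mul_sum]

/-- Coefficient-counting lemma for nested local updates: for a nonnegative
sequence `a`, a strictly increasing sequence of stopping indices
`ι 1 < ι 2 < ⋯ < ι M` with `ι 1 = 0`, and blocks of sizes `K` and `K*T`,
the weighted partial block sums are bounded by `4` times the total sum. -/
theorem stmt_15 (K T : ℕ) (hK : 1 ≤ K) (hT : 1 ≤ T)
    (a : ℕ → ℝ) (ha : ∀ i, 0 ≤ a i)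
    (M : ℕ) (hM : 2 ≤ M) (ι : ℕ → ℕ) (hι1 : ι 1 = 0)
    (hmono : ∀ m, 1 ≤ m → m < M → ι m < ι (m + 1)) :
    ∑ m ∈ Finset.Icc 1 (M - 1),
        (((min (ι (m + 1) - ι m) K : ℕ) : ℝ) / (K : ℝ) *
            ∑ i ∈ Finset.Ico (beta1 K T (ι m)) (ι m), a i
          + ((min (ι (m + 1) - ι m) (K * T) : ℕ) : ℝ) / ((K : ℝ) * (T : ℝ)) *
            ∑ i ∈ Finset.Ico (beta2 K T (ι m)) (beta1 K T (ι m)), a i) ≤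
      4 * ∑ i ∈ Finset.range (ι M), a i := by
  have hKT : 1 ≤ K * T := Nat.one_le_iff_ne_zero.mpr (by positivity)
  rw [Finset.sum_add_distrib]
  have h1 : ∑ m ∈ Finset.Icc 1 (M - 1),
      ((min (ι (m + 1) - ι m) K : ℕ) : ℝ) / (K : ℝ) *
        ∑ i ∈ Finset.Ico (beta1 K T (ι m)) (ι m), a i
      ≤ 2 * ∑ i ∈ Finset.range (ι M), a i := by
    have := keyB K hK a ha M ι hmono
    calc ∑ m ∈ Finset.Icc 1 (M - 1),
          ((min (ι (m + 1) - ι m) K : ℕ) : ℝ) / (K : ℝ) *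
            ∑ i ∈ Finset.Ico (beta1 K T (ι m)) (ι m), a i
        = ∑ m ∈ Finset.Icc 1 (M - 1),
            ((min (ι (m + 1) - ι m) K : ℕ) : ℝ) / (K : ℝ) *
              ∑ i ∈ Finset.Ico (K * (ι m / K)) (ι m), a i := by
          apply Finset.sum_congr rfl
          intro m _
          rw [beta1_eq K T (ι m) hK]
      _ ≤ 2 * ∑ i ∈ Finset.range (ι M), a i := this
  have h2 : ∑ m ∈ Finset.Icc 1 (M - 1),
      ((min (ι (m + 1) - ι m) (K * T) : ℕ) : ℝ) / ((K : ℝ) * (T : ℝ)) *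
        ∑ i ∈ Finset.Ico (beta2 K T (ι m)) (beta1 K T (ι m)), a i
      ≤ 2 * ∑ i ∈ Finset.range (ι M), a i := by
    have hkey := keyB (K * T) hKT a ha M ι hmono
    calc ∑ m ∈ Finset.Icc 1 (M - 1),
          ((min (ι (m + 1) - ι m) (K * T) : ℕ) : ℝ) / ((K : ℝ) * (T : ℝ)) *
            ∑ i ∈ Finset.Ico (beta2 K T (ι m)) (beta1 K T (ι m)), a i
        ≤ ∑ m ∈ Finset.Icc 1 (M - 1),
            ((min (ι (m + 1) - ι m) (K * T) : ℕ) : ℝ) / (((K * T : ℕ) : ℝ)) *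
              ∑ i ∈ Finset.Ico ((K * T) * (ι m / (K * T))) (ι m), a i := by
          apply Finset.sum_le_sum
          intro m _
          push_cast
          apply mul_le_mul_of_nonneg_left
          · apply Finset.sum_le_sum_of_subset_of_nonneg
            · rw [beta2_eq]
              apply Finset.Ico_subset_Ico le_rfl
              rw [beta1_eq K T (ι m) hK]
              exact Nat.mul_div_le (ι m) K
            · intro i _ _
              exact ha i
          · positivity
      _ ≤ 2 * ∑ i ∈ Finset.range (ι M), a i := hkey
  linarith
end
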